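/- Let K ⊆ K₁ ⊆ K₂ ⊆ L be fields such that L/K is Galois, K₂/K is finite Galois, and there exists an infinite pairwise linearly disjoint family of finite proper subextensions of L/K₁ of the same degree and Galois over K. Then there also exists an infinite pairwise linearly disjoint family of finite proper subextensions of L/K₂ of the same degree and Galois over K. -/

import Mathlib

/-!
Let `C` be the image of `K₂` in `L` and `Eᵢ = K₂ Fᵢ`. Since `C/K₁` is finite separable it has
finitely many subfields, and the `Fᵢ` meet pairwise in `K₁`, so all but finitely many `Fᵢ` meet `C`
in `K₁`; such an `Fᵢ` is Galois, hence linearly disjoint from `C`, and `[Eᵢ : K₂] = [Fᵢ : K₁] = n`.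
If `Eᵢ ∩ Eⱼ ≠ K₂`, then `Fⱼ` meets `C Fᵢ` nontrivially: otherwise `Eᵢ ∩ Eⱼ` would be a field between
`C` and `C Fⱼ` meeting the Galois extension `Fⱼ` trivially, which forces it to be `C` by a degree
count. As `C Fᵢ` is again finite separable, this happens for only finitely many `j`, so a greedy
choice yields infinitely many `Eᵢ` meeting pairwise in `K₂`, i.e. linearly disjoint, being Galois.
-/

open Function IntermediateField Module

theorem Pairwise.finite_setOf_not_disjoint {ι α : Type*} [Lattice α] [OrderBot α] {G : ι → α}
    (hG : Pairwise (Disjoint on G)) {X : α} (hX : (Set.Iic X).Finite) :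
    {i | ¬Disjoint (G i) X}.Finite := by
  refine Set.Finite.of_finite_image (f := fun i => G i ⊓ X)
    (hX.subset (Set.image_subset_iff.2 fun i _ => inf_le_right)) fun i hi j _ hij => ?_
  by_contra hne
  have hdisj : Disjoint (G i ⊓ X) (G j ⊓ X) := (hG hne).mono inf_le_left inf_le_left
  rw [← show G i ⊓ X = G j ⊓ X from hij, disjoint_self] at hdisj
  exact hi (disjoint_iff.2 hdisj)

theorem Pairwise.injective_of_ne_bot {ι α : Type*} [PartialOrder α] [OrderBot α] {f : ι → α}
    (hf : Pairwise (Disjoint on f)) (hne : ∀ i, f i ≠ ⊥) : Injective f := fun i j hij =>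
  by_contra fun h => hne i (disjoint_self.1 (by simpa [onFun, hij] using hf h))

theorem Set.Infinite.exists_seq_pairwise {ι : Type*} {s : Set ι} (hs : s.Infinite)
    (r : ι → ι → Prop) [Std.Symm r] (h : ∀ i ∈ s, {j ∈ s | ¬r i j}.Finite) :
    ∃ g : ℕ → ι, (∀ n, g n ∈ s) ∧ Pairwise (r on g) := by
  refine exists_seq_of_forall_finset_exists' (· ∈ s) r fun t ht => ?_
  have hbad : (⋃ i ∈ t, {j ∈ s | ¬r i j}).Finite := t.finite_toSet.biUnion fun i hi => h i (ht i hi)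
  obtain ⟨j, hjs, hj⟩ := (hs.sdiff hbad).nonempty
  simp only [Set.mem_iUnion, Set.mem_ofPred_eq, not_exists, not_and, not_not] at hj
  exact ⟨j, hjs, fun i hi => hj i hi hjs⟩

namespace IntermediateField

variable {k E : Type*} [Field k] [Field E] [Algebra k E]

theorem finite_Iic (X : IntermediateField k E) [FiniteDimensional k X]
    [Algebra.IsSeparable k X] : (Set.Iic X).Finite := by
  have : Finite (IntermediateField k X) :=
    Field.finite_intermediateField_of_exists_primitive_element k X
      (Field.exists_primitive_element k X)
  exact (Set.finite_range lift).subset fun Y hY => ⟨restrict hY, lift_restrict hY⟩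

theorem eq_of_disjoint_of_le_sup {A B N : IntermediateField k E} [IsGalois k A]
    [FiniteDimensional k A] [FiniteDimensional k B] (hAB : Disjoint A B) (hBN : B ≤ N)
    (hNAB : N ≤ A ⊔ B) (hAN : Disjoint A N) : N = B := by
  have : FiniteDimensional k N :=
    .of_injective (inclusion hNAB).toLinearMap (inclusion hNAB).injective
  have hsup : A ⊔ N = A ⊔ B := le_antisymm (sup_le le_sup_left hNAB) (sup_le_sup_left hBN _)
  have hN := (LinearDisjoint.of_inf_eq_bot (disjoint_iff.1 hAN)).finrank_sup
  rw [hsup, (LinearDisjoint.of_inf_eq_bot (disjoint_iff.1 hAB)).finrank_sup,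
    Nat.mul_left_cancel_iff finrank_pos] at hN
  exact (eq_of_le_of_finrank_eq hBN hN).symm

variable (k) (k' : Type*) [Field k'] [Algebra k k'] [Algebra k' E] [IsScalarTower k k' E]

theorem restrictScalars_bot_eq_fieldRange :
    (⊥ : IntermediateField k' E).restrictScalars k =
      (IsScalarTower.toAlgHom k k' E).fieldRange := by
  ext x
  simp [mem_bot]

theorem restrictScalars_adjoin_eq_fieldRange_sup (S : Set E) :
    (adjoin k' S).restrictScalars k = (IsScalarTower.toAlgHom k k' E).fieldRange ⊔ adjoin k S := by
  obtain ⟨e, he⟩ : ∃ e : k' ≃ₐ[k] (IsScalarTower.toAlgHom k k' E).fieldRange,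
      algebraMap k' E = algebraMap (IsScalarTower.toAlgHom k k' E).fieldRange E ∘ e :=
    ⟨AlgEquiv.ofInjectiveField _, funext fun x =>
      (AlgEquiv.ofInjective_apply (IsScalarTower.toAlgHom k k' E) (RingHom.injective _) x).symm⟩
  rw [restrictScalars_adjoin_of_algEquiv e he, restrictScalars_adjoin_eq_sup]

instance finiteDimensional_fieldRange [FiniteDimensional k k'] :
    FiniteDimensional k (IsScalarTower.toAlgHom k k' E).fieldRange :=
  (AlgEquiv.ofInjectiveField (IsScalarTower.toAlgHom k k' E)).toLinearEquiv.finiteDimensional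

variable {k k'}

theorem linearDisjoint_of_disjoint_fieldRange {A : IntermediateField k E} [IsGalois k A]
    [FiniteDimensional k A] [FiniteDimensional k k']
    (h : Disjoint A (IsScalarTower.toAlgHom k k' E).fieldRange) : A.LinearDisjoint k' :=
  linearDisjoint_iff'.1 (LinearDisjoint.of_inf_eq_bot (disjoint_iff.1 h))

theorem LinearDisjoint.finiteDimensional_adjoin {A : IntermediateField k E}
    (H : A.LinearDisjoint k') [FiniteDimensional k A] :
    FiniteDimensional k' (adjoin k' (A : Set E)) :=
  Module.finite_of_rank_eq_nat (H.adjoin_rank_eq_rank_left_of_isAlgebraic_left.trans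
    (finrank_eq_rank k A).symm)

theorem LinearDisjoint.finrank_adjoin {A : IntermediateField k E}
    (H : A.LinearDisjoint k') [Algebra.IsAlgebraic k A] :
    finrank k' (adjoin k' (A : Set E)) = finrank k A :=
  congrArg Cardinal.toNat H.adjoin_rank_eq_rank_left_of_isAlgebraic_left

theorem isGalois_restrictScalars_adjoin [Algebra.IsSeparable k E] [Normal k k']
    (A : IntermediateField k E) [Normal k A] : IsGalois k ((adjoin k' (A : Set E)).restrictScalars k) := by
  have : Normal k (IsScalarTower.toAlgHom k k' E).fieldRange :=
    Normal.of_algEquiv (AlgEquiv.ofInjectiveField (IsScalarTower.toAlgHom k k' E))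
  rw [restrictScalars_adjoin_eq_fieldRange_sup, adjoin_self]
  exact ⟨⟩

theorem isGalois_of_isGalois_restrictScalars {A : IntermediateField k' E}
    (h : IsGalois k (A.restrictScalars k)) : IsGalois k' A :=
  have : IsGalois k A := h
  IsGalois.tower_top_of_isGalois k k' A

theorem disjoint_adjoin_of_disjoint_restrictScalars {A B : IntermediateField k E} [IsGalois k A]
    [FiniteDimensional k A] [FiniteDimensional k k']
    (hA : Disjoint A (IsScalarTower.toAlgHom k k' E).fieldRange)
    (hAB : Disjoint A ((adjoin k' (B : Set E)).restrictScalars k)) :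
    Disjoint (adjoin k' (A : Set E)) (adjoin k' (B : Set E)) := by
  have hAk' := restrictScalars_adjoin_eq_fieldRange_sup k k' (A : Set E)
  rw [adjoin_self] at hAk'
  rw [disjoint_iff]
  apply restrictScalars_injective k
  rw [restrictScalars_bot_eq_fieldRange]
  refine eq_of_disjoint_of_le_sup hA ?_ ?_ (hAB.mono_right ?_)
  · rw [← restrictScalars_bot_eq_fieldRange]
    exact (restrictScalars_le_iff k).2 bot_le
  · rw [sup_comm, ← hAk']
    exact (restrictScalars_le_iff k).2 inf_le_left
  · exact (restrictScalars_le_iff k).2 inf_le_right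

variable (k') in
theorem exists_seq_pairwise_disjoint_adjoin {ι : Type*} [Infinite ι] [FiniteDimensional k k']
    [Algebra.IsSeparable k E] {F : ι → IntermediateField k E} [∀ i, IsGalois k (F i)]
    [∀ i, FiniteDimensional k (F i)] (hF : Pairwise (Disjoint on F)) :
    ∃ g : ℕ → ι, (∀ m, Disjoint (F (g m)) (IsScalarTower.toAlgHom k k' E).fieldRange) ∧
      Pairwise (Disjoint on fun m => adjoin k' (F (g m) : Set E)) := by
  set C := (IsScalarTower.toAlgHom k k' E).fieldRange
  have hS : {i | Disjoint (F i) C}.Infinite := by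
    simpa only [Set.compl_ofPred, not_not] using
      (hF.finite_setOf_not_disjoint (finite_Iic C)).infinite_compl
  have hbad (i : ι) (_ : Disjoint (F i) C) :
      {j | Disjoint (F j) C ∧ ¬Disjoint (adjoin k' (F i : Set E)) (adjoin k' (F j))}.Finite := by
    have hFi := restrictScalars_adjoin_eq_fieldRange_sup k k' (F i : Set E)
    rw [adjoin_self] at hFi
    refine (hF.finite_setOf_not_disjoint (finite_Iic (C ⊔ F i))).subset ?_
    rintro j ⟨hj, hij⟩ h
    exact hij (disjoint_adjoin_of_disjoint_restrictScalars hj (hFi ▸ h)).symm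
  have : Std.Symm (Disjoint on fun i => adjoin k' (F i : Set E)) := ⟨fun _ _ h => h.symm⟩
  obtain ⟨g, hgS, hg⟩ := hS.exists_seq_pairwise _ hbad
  exact ⟨g, hgS, hg⟩

end IntermediateField

/-- Let `K ⊆ K₁ ⊆ K₂ ⊆ L` with `L/K` Galois and `K₂/K` finite Galois. If there is an
infinite pairwise linearly disjoint family of finite proper subextensions of `L/K₁` of the
same degree which are Galois over `K`, then there is also such a family for `L/K₂`. -/
theorem condition_L_up
    (K K₁ K₂ L : Type*) [Field K] [Field K₁] [Field K₂] [Field L]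
    [Algebra K K₁] [Algebra K K₂] [Algebra K L]
    [Algebra K₁ K₂] [Algebra K₁ L] [Algebra K₂ L]
    [IsScalarTower K K₁ K₂] [IsScalarTower K K₂ L] [IsScalarTower K K₁ L]
    [IsScalarTower K₁ K₂ L]
    [IsGalois K L] [FiniteDimensional K K₂] [IsGalois K K₂]
    (hcond : ∃ n : ℕ, 1 < n ∧ ∃ F : ℕ → IntermediateField K₁ L,
      Function.Injective F ∧
      (∀ i, FiniteDimensional K₁ (F i) ∧ Module.finrank K₁ (F i) = n ∧ F i ≠ ⊥ ∧
        IsGalois K ((F i).restrictScalars K)) ∧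
      (∀ i j, i ≠ j → (F i).LinearDisjoint (F j))) :
    ∃ n : ℕ, 1 < n ∧ ∃ F : ℕ → IntermediateField K₂ L,
      Function.Injective F ∧
      (∀ i, FiniteDimensional K₂ (F i) ∧ Module.finrank K₂ (F i) = n ∧ F i ≠ ⊥ ∧
        IsGalois K ((F i).restrictScalars K)) ∧
      (∀ i j, i ≠ j → (F i).LinearDisjoint (F j)) := by
  obtain ⟨n, hn, F, -, hF, hFdisj⟩ := hcond
  have : Algebra.IsSeparable K₁ L := Algebra.isSeparable_tower_top_of_isSeparable K K₁ L
  have : FiniteDimensional K₁ K₂ := FiniteDimensional.right K K₁ K₂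
  have (i : ℕ) : FiniteDimensional K₁ (F i) := (hF i).1
  have (i : ℕ) : IsGalois K₁ (F i) := isGalois_of_isGalois_restrictScalars (hF i).2.2.2
  obtain ⟨g, hgC, hg⟩ := exists_seq_pairwise_disjoint_adjoin K₂
    fun i j h => disjoint_iff.2 (hFdisj i j h).inf_eq_bot
  set E : ℕ → IntermediateField K₂ L := fun m => adjoin K₂ (F (g m) : Set L)
  have hLD (m : ℕ) : (F (g m)).LinearDisjoint K₂ := linearDisjoint_of_disjoint_fieldRange (hgC m)
  have hEfin (m : ℕ) : FiniteDimensional K₂ (E m) := (hLD m).finiteDimensional_adjoin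
  have hErank (m : ℕ) : finrank K₂ (E m) = n := (hLD m).finrank_adjoin.trans (hF (g m)).2.1
  have hEne (m : ℕ) : E m ≠ ⊥ := fun h => by
    rw [← hErank m, h, IntermediateField.finrank_bot] at hn
    exact hn.false
  have hEgal (m : ℕ) : IsGalois K ((E m).restrictScalars K) := by
    have := (hF (g m)).2.2.2
    exact isGalois_restrictScalars_adjoin ((F (g m)).restrictScalars K)
  refine ⟨n, hn, E, hg.injective_of_ne_bot hEne, fun m => ⟨hEfin m, hErank m, hEne m, hEgal m⟩,
    fun a b hab => ?_⟩
  have := isGalois_of_isGalois_restrictScalars (hEgal a)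
  exact LinearDisjoint.of_inf_eq_bot (A := E a) (B := E b) (disjoint_iff.1 (hg hab))
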